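/- If the grid G_t used for the dynamic program at stage t contains every storage state reachable at the beginning of stage t (under integer-multiple-of-u trades and efficiencies η±), then the piecewise-linear interpolated value functions Ṽ_t agree with the exact value functions V_t at all states visited by the dynamic program, and the DP solution attains the same optimal value as the exact mixed-integer formulation. -/

import Mathlib

/-!
At a grid point the interpolation returns the value it interpolates, so by backward induction
`Vapprox` and `Vexact` agree on reachable states: at a reachable state the recursion only queries
successor states, which are reachable at the next stage and hence lie on the next grid.
`Vexact` is in turn the optimal value of the monolithic problem by the principle of optimality:
the rewards of feasible plans with `n + 1` stages to go are the union, over feasible first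
actions `k`, of `π t k` plus the rewards of plans from the successor state, and the greatest
element of a finite union is the largest of the greatest elements.
-/

/-- Storage transition of the DP rolling intrinsic: `S(s, f) = s + ηp·f` if `f > 0`
(charging) and `s + f/ηm` otherwise (discharging). -/
noncomputable def socTrans (ηp ηm : ℝ) (s f : ℝ) : ℝ :=
  if 0 < f then s + ηp * f else s + f / ηm

/-- Exact backward value functions: `Vexact X π ηp ηm u n t s` is the value at stage `t`,
state `s`, with `n` stages to go; actions are integers `k` (trades `k·u`). -/
noncomputable def Vexact (X : ℕ → ℝ → Finset ℤ) (π : ℕ → ℤ → ℝ)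
    (ηp ηm u : ℝ) : ℕ → ℕ → ℝ → ℝ
  | 0, _, _ => 0
  | n + 1, t, s =>
      sSup ((fun k : ℤ => π t k +
        Vexact X π ηp ηm u n (t + 1) (socTrans ηp ηm s ((k : ℝ) * u))) '' (X t s : Set ℤ))

/-- Approximate backward value functions: at each stage the stage value is replaced by
its interpolation `I (G t) ·` on the finite grid `G t`. -/
noncomputable def Vapprox (I : Finset ℝ → (ℝ → ℝ) → (ℝ → ℝ)) (G : ℕ → Finset ℝ)
    (X : ℕ → ℝ → Finset ℤ) (π : ℕ → ℤ → ℝ) (ηp ηm u : ℝ) : ℕ → ℕ → ℝ → ℝ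
  | 0, _, _ => 0
  | n + 1, t, s =>
      I (G t)
        (fun x => sSup ((fun k : ℤ => π t k +
          Vapprox I G X π ηp ηm u n (t + 1) (socTrans ηp ηm x ((k : ℝ) * u))) ''
            (X t x : Set ℤ))) s

/-- The state trajectory induced by an integer action sequence. -/
noncomputable def socTraj (ηp ηm u : ℝ) (s0 : ℝ) (t0 : ℕ) (a : ℕ → ℤ) : ℕ → ℝ
  | 0 => s0
  | n + 1 => socTrans ηp ηm (socTraj ηp ηm u s0 t0 a n) ((a (t0 + n) : ℝ) * u)

section Trajectories

variable {ηp ηm u : ℝ}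

lemma socTraj_congr {s0 : ℝ} {t0 : ℕ} {a b : ℕ → ℤ} {n : ℕ}
    (h : ∀ m < n, a (t0 + m) = b (t0 + m)) :
    socTraj ηp ηm u s0 t0 a n = socTraj ηp ηm u s0 t0 b n := by
  induction n with
  | zero => rfl
  | succ n ih =>
    simp only [socTraj, ih fun m hm => h m (by omega), h n (by omega)]

lemma socTraj_succ' (s0 : ℝ) (t0 : ℕ) (a : ℕ → ℤ) (n : ℕ) :
    socTraj ηp ηm u s0 t0 a (n + 1) =
      socTraj ηp ηm u (socTrans ηp ηm s0 ((a t0 : ℝ) * u)) (t0 + 1) a n := by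
  induction n with
  | zero => rfl
  | succ n ih =>
    rw [socTraj, ih, socTraj, Nat.add_right_comm t0 1 n, add_assoc]

end Trajectories

section Plans

variable (X : ℕ → ℝ → Finset ℤ) (π : ℕ → ℤ → ℝ) (ηp ηm u : ℝ)

def IsFeasiblePlan (n t0 : ℕ) (s0 : ℝ) (a : ℕ → ℤ) : Prop :=
  ∀ m < n, a (t0 + m) ∈ X (t0 + m) (socTraj ηp ηm u s0 t0 a m)

def planReward (n t0 : ℕ) (a : ℕ → ℤ) : ℝ :=
  ∑ m ∈ Finset.range n, π (t0 + m) (a (t0 + m))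

def feasibleRewards (n t0 : ℕ) (s0 : ℝ) : Set ℝ :=
  {r | ∃ a, IsFeasiblePlan X ηp ηm u n t0 s0 a ∧ r = planReward π n t0 a}

variable {X π ηp ηm u}

lemma IsFeasiblePlan.congr {n t0 : ℕ} {s0 : ℝ} {a b : ℕ → ℤ}
    (h : ∀ m < n, a (t0 + m) = b (t0 + m)) (ha : IsFeasiblePlan X ηp ηm u n t0 s0 a) :
    IsFeasiblePlan X ηp ηm u n t0 s0 b := fun m hm => by
  rw [← h m hm, ← socTraj_congr fun j hj => h j (hj.trans hm)]
  exact ha m hm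

lemma planReward_congr {n t0 : ℕ} {a b : ℕ → ℤ} (h : ∀ m < n, a (t0 + m) = b (t0 + m)) :
    planReward π n t0 a = planReward π n t0 b :=
  Finset.sum_congr rfl fun m hm => by rw [h m (Finset.mem_range.1 hm)]

lemma planReward_succ (n t0 : ℕ) (a : ℕ → ℤ) :
    planReward π (n + 1) t0 a = π t0 (a t0) + planReward π n (t0 + 1) a := by
  rw [planReward, Finset.sum_range_succ', add_comm]
  simp only [planReward, Nat.add_zero, add_assoc, Nat.add_comm 1]

lemma isFeasiblePlan_succ_iff {n t0 : ℕ} {s0 : ℝ} {a : ℕ → ℤ} :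
    IsFeasiblePlan X ηp ηm u (n + 1) t0 s0 a ↔
      a t0 ∈ X t0 s0 ∧
        IsFeasiblePlan X ηp ηm u n (t0 + 1) (socTrans ηp ηm s0 ((a t0 : ℝ) * u)) a := by
  simp only [IsFeasiblePlan, Nat.forall_lt_succ_left, socTraj_succ', Nat.add_zero,
    add_assoc, Nat.add_comm 1]
  rfl

lemma feasibleRewards_succ (n t0 : ℕ) (s0 : ℝ) :
    feasibleRewards X π ηp ηm u (n + 1) t0 s0 =
      ⋃ k ∈ X t0 s0, (π t0 k + ·) ''
        feasibleRewards X π ηp ηm u n (t0 + 1) (socTrans ηp ηm s0 ((k : ℝ) * u)) := by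
  ext r
  simp only [feasibleRewards, Set.mem_ofPred_eq, Set.mem_iUnion, Set.mem_image,
    isFeasiblePlan_succ_iff, planReward_succ]
  constructor
  · rintro ⟨a, ⟨ha0, ha⟩, rfl⟩
    exact ⟨a t0, ha0, _, ⟨a, ha, rfl⟩, rfl⟩
  · rintro ⟨k, hk, _, ⟨a, ha, rfl⟩, rfl⟩
    have hb : ∀ m, Function.update a t0 k (t0 + 1 + m) = a (t0 + 1 + m) := fun m =>
      Function.update_of_ne (by omega) _ _
    refine ⟨Function.update a t0 k, ?_, ?_⟩
    · rw [Function.update_self]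
      exact ⟨hk, ha.congr fun m _ => (hb m).symm⟩
    · rw [Function.update_self, planReward_congr fun m _ => hb m]

end Plans

theorem isGreatest_biUnion_finset {α ι : Type*} [ConditionallyCompleteLinearOrder α]
    {s : Finset ι} (hs : s.Nonempty) {A : ι → Set α} {g : ι → α}
    (h : ∀ i ∈ s, IsGreatest (A i) (g i)) :
    IsGreatest (⋃ i ∈ s, A i) (sSup (g '' s)) := by
  have hfin : (g '' s).Finite := s.finite_toSet.image g
  obtain ⟨i, hi, hgi⟩ := ((Finset.coe_nonempty.2 hs).image g).csSup_mem hfin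
  refine ⟨Set.mem_biUnion hi (hgi ▸ (h i hi).1), ?_⟩
  intro x hx
  obtain ⟨j, hj, hxj⟩ := Set.mem_iUnion₂.1 hx
  exact ((h j hj).2 hxj).trans (le_csSup hfin.bddAbove ⟨j, hj, rfl⟩)

theorem Vexact_isGreatest_feasibleRewards (X : ℕ → ℝ → Finset ℤ) (π : ℕ → ℤ → ℝ)
    (ηp ηm u : ℝ) (hX : ∀ t s, (X t s).Nonempty) (n t0 : ℕ) (s0 : ℝ) :
    IsGreatest (feasibleRewards X π ηp ηm u n t0 s0) (Vexact X π ηp ηm u n t0 s0) := by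
  induction n generalizing t0 s0 with
  | zero =>
    have : feasibleRewards X π ηp ηm u 0 t0 s0 = {0} := by
      ext r
      simp [feasibleRewards, IsFeasiblePlan, planReward]
    exact this ▸ isGreatest_singleton
  | succ n ih =>
    rw [feasibleRewards_succ]
    exact isGreatest_biUnion_finset (hX t0 s0) fun k _ =>
      (add_right_mono (a := π t0 k)).map_isGreatest (ih _ _)

theorem Vapprox_eq_Vexact_of_reachable (I : Finset ℝ → (ℝ → ℝ) → (ℝ → ℝ))
    (G : ℕ → Finset ℝ) (X : ℕ → ℝ → Finset ℤ) (π : ℕ → ℤ → ℝ) (ηp ηm u : ℝ)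
    (Reach : ℕ → Set ℝ) (hI : ∀ (g : Finset ℝ) (f : ℝ → ℝ) (s : ℝ), s ∈ g → I g f s = f s)
    (hclosed : ∀ t, ∀ s ∈ Reach t, ∀ k ∈ X t s,
      socTrans ηp ηm s ((k : ℝ) * u) ∈ Reach (t + 1))
    (hgrid : ∀ t, Reach t ⊆ (G t : Set ℝ)) (n t : ℕ) {s : ℝ} (hs : s ∈ Reach t) :
    Vapprox I G X π ηp ηm u n t s = Vexact X π ηp ηm u n t s := by
  induction n generalizing t s with
  | zero => rfl
  | succ n ih =>
    rw [Vapprox, hI _ _ s (hgrid t hs), Vexact]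
    exact congrArg sSup <| Set.image_congr fun k hk =>
      congrArg (π t k + ·) (ih (t + 1) (hclosed t s hs k hk))

/-- If the interpolation operator reproduces function values at grid points,
the reachable sets are closed under the transitions, and for every stage `t` the grid
`G t` contains all storage states reachable at stage `t`, then the interpolated value
functions agree with the exact value functions at all states visited by the DP, and
(for nonempty action sets) the DP solution attains the same optimal value as the exact
(mixed-integer) monolithic formulation. -/
theorem dp_exact_on_reachable_grid
    (I : Finset ℝ → (ℝ → ℝ) → (ℝ → ℝ)) (G : ℕ → Finset ℝ)
    (X : ℕ → ℝ → Finset ℤ) (π : ℕ → ℤ → ℝ) (ηp ηm u : ℝ)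
    (Reach : ℕ → Set ℝ)
    (hI : ∀ (g : Finset ℝ) (f : ℝ → ℝ) (s : ℝ), s ∈ g → I g f s = f s)
    (hclosed : ∀ t, ∀ s ∈ Reach t, ∀ k ∈ X t s,
      socTrans ηp ηm s ((k : ℝ) * u) ∈ Reach (t + 1))
    (hgrid : ∀ t, Reach t ⊆ (G t : Set ℝ)) :
    (∀ n t, ∀ s ∈ Reach t,
        Vapprox I G X π ηp ηm u n t s = Vexact X π ηp ηm u n t s) ∧
    (∀ (T t0 : ℕ) (s0 : ℝ), t0 ≤ T → s0 ∈ Reach t0 →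
      (∀ t s, (X t s).Nonempty) →
      IsGreatest
        {r : ℝ | ∃ a : ℕ → ℤ,
          (∀ n, n < T + 1 - t0 → a (t0 + n) ∈ X (t0 + n) (socTraj ηp ηm u s0 t0 a n)) ∧
          r = ∑ n ∈ Finset.range (T + 1 - t0), π (t0 + n) (a (t0 + n))}
        (Vapprox I G X π ηp ηm u (T + 1 - t0) t0 s0)) := by
  have hexact := Vapprox_eq_Vexact_of_reachable I G X π ηp ηm u Reach hI hclosed hgrid
  refine ⟨fun n t s hs => hexact n t hs, fun T t0 s0 _ hs0 hX => ?_⟩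
  rw [hexact _ t0 hs0]
  exact Vexact_isGreatest_feasibleRewards X π ηp ηm u hX _ t0 s0
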